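/- arXiv:1605.02124 — 2 statements merged into one kernel-verified Lean document; each statement's English description precedes it below -/
import Mathlib

section
/- If G is a connected graph of order at least 3 that is not a path, then the power domination number satisfies γ_P(G) ≤ F_c(G)/2. -/
open SimpleGraph

variable {V : Type*}

/-- One step of the (zero) forcing process: a colored vertex with exactly one
uncolored neighbor forces that neighbor to become colored. -/
def zfStep (G : SimpleGraph V) (S : Set V) : Set V :=
  S ∪ {w | ∃ v ∈ S, G.neighborSet v \ S = {w}}

/-- `S` is a forcing set if iterating the forcing process colors all vertices. -/
def IsForcingSet (G : SimpleGraph V) (S : Set V) : Prop :=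
  ∃ n : ℕ, (zfStep G)^[n] S = Set.univ

/-- A connected forcing set: a forcing set inducing a connected subgraph. -/
def IsConnForcingSet (G : SimpleGraph V) (S : Set V) : Prop :=
  IsForcingSet G S ∧ (G.induce S).Connected

/-- The forcing number `F(G)`. -/
noncomputable def forcingNumber (G : SimpleGraph V) : ℕ :=
  sInf (Set.ncard '' {S : Set V | IsForcingSet G S})

/-- The connected forcing number `F_c(G)`. -/
noncomputable def connForcingNumber (G : SimpleGraph V) : ℕ :=
  sInf (Set.ncard '' {S : Set V | IsConnForcingSet G S})

/-- Closed neighborhood of a set of vertices. -/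
def closedNbhd (G : SimpleGraph V) (S : Set V) : Set V :=
  {w | w ∈ S ∨ ∃ v ∈ S, G.Adj v w}

/-- The monitored sets of the power domination process:
`P⁰(S) = N[S]`, and `P^{i+1}(S)` adds every vertex that is the unique
unmonitored neighbor of some monitored vertex. -/
def monitored (G : SimpleGraph V) (S : Set V) : ℕ → Set V
  | 0 => closedNbhd G S
  | (i + 1) => zfStep G (monitored G S i)

/-- `S` is a power dominating set if the monitoring process reaches all of `V`. -/
def IsPowerDominating (G : SimpleGraph V) (S : Set V) : Prop :=
  ∃ i : ℕ, monitored G S i = Set.univ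

/-- The power domination number `γ_P(G)`. -/
noncomputable def powerDomNumber (G : SimpleGraph V) : ℕ :=
  sInf (Set.ncard '' {S : Set V | IsPowerDominating G S})

/-!
Take a minimum connected forcing set `S`. If `|S| = 1`, forcing from a single vertex can only
ever extend an induced path at its last vertex (all earlier vertices have every neighbor
colored), so `G` would be a path. Otherwise the connected graph `G[S]` has a dominating set `D`
with `2|D| ≤ |S|`: one of the two parity classes of the distance to a fixed vertex. Then
`S ⊆ N[D]`, so the forcing process started from `N[D]` colors everything and `D` is power
dominating.
-/

section Forcing

variable {G : SimpleGraph V}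

lemma monotone_zfStep (G : SimpleGraph V) : Monotone (zfStep G) := by
  rintro S T hST x (hx | ⟨v, hv, hvx⟩)
  · exact Or.inl (hST hx)
  by_cases hxT : x ∈ T
  · exact Or.inl hxT
  refine Or.inr ⟨v, hST hv, Set.eq_singleton_iff_unique_mem.mpr ⟨⟨?_, hxT⟩, ?_⟩⟩
  · exact (hvx.symm.subset rfl).1
  · exact fun y hy => hvx.subset ⟨hy.1, fun hyS => hy.2 (hST hyS)⟩

lemma monitored_eq_iterate (G : SimpleGraph V) (S : Set V) (n : ℕ) :
    monitored G S n = (zfStep G)^[n] (closedNbhd G S) := by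
  induction n with
  | zero => rfl
  | succ n ih => rw [Function.iterate_succ_apply', ← ih]; rfl

lemma IsForcingSet.isPowerDominating {S T : Set V} (hT : IsForcingSet G T)
    (hTS : T ⊆ closedNbhd G S) : IsPowerDominating G S := by
  obtain ⟨n, hn⟩ := hT
  refine ⟨n, Set.eq_univ_of_univ_subset ?_⟩
  rw [monitored_eq_iterate, ← hn]
  exact (monotone_zfStep G).iterate n hTS

lemma isConnForcingSet_univ (hG : G.Connected) : IsConnForcingSet G Set.univ :=
  ⟨⟨0, rfl⟩, (Iso.connected_iff (induceUnivIso G)).mpr hG⟩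

lemma exists_isConnForcingSet_ncard_eq (hG : G.Connected) :
    ∃ S, IsConnForcingSet G S ∧ S.ncard = connForcingNumber G :=
  Nat.sInf_mem (s := Set.ncard '' {S | IsConnForcingSet G S})
    ⟨_, Set.univ, isConnForcingSet_univ hG, rfl⟩

lemma powerDomNumber_le_ncard {S : Set V} (hS : IsPowerDominating G S) :
    powerDomNumber G ≤ S.ncard :=
  Nat.sInf_le ⟨S, hS, rfl⟩

end Forcing

section InducedPath

variable {G : SimpleGraph V}

def IsInducedPathSeq (G : SimpleGraph V) (w : ℕ → V) (m : ℕ) : Prop :=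
  Set.InjOn w (Set.Iic m) ∧
    ∀ j ≤ m, ∀ k ≤ m, (G.Adj (w j) (w k) ↔ j + 1 = k ∨ k + 1 = j)

lemma eqOn_update_succ_Iic (w : ℕ → V) (m : ℕ) (x : V) :
    Set.EqOn (Function.update w (m + 1) x) w (Set.Iic m) :=
  fun _ hj => Function.update_of_ne (Nat.ne_of_lt (Nat.lt_succ_of_le hj)) x w

lemma image_update_Iic_succ (w : ℕ → V) (m : ℕ) (x : V) :
    Function.update w (m + 1) x '' Set.Iic (m + 1) = insert x (w '' Set.Iic m) := by
  rw [← Order.succ_eq_add_one, Order.Iic_succ, Set.image_insert_eq, Order.succ_eq_add_one,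
    Function.update_self, (eqOn_update_succ_Iic w m x).image_eq]

lemma IsInducedPathSeq.update_succ {w : ℕ → V} {m : ℕ} {x : V} (hw : IsInducedPathSeq G w m)
    (hx : x ∉ w '' Set.Iic m) (hxadj : ∀ j ≤ m, (G.Adj (w j) x ↔ j = m)) :
    IsInducedPathSeq G (Function.update w (m + 1) x) (m + 1) := by
  have heq := eqOn_update_succ_Iic w m x
  constructor
  · rw [← Order.succ_eq_add_one, Order.Iic_succ, Set.injOn_insert (by simp),
      Order.succ_eq_add_one, Function.update_self, heq.image_eq]
    exact ⟨hw.1.congr heq.symm, hx⟩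
  · intro j hj k hk
    rcases Nat.le_succ_iff.mp hj with hj | rfl <;> rcases Nat.le_succ_iff.mp hk with hk | rfl
    · rw [heq hj, heq hk]; exact hw.2 j hj k hk
    · rw [heq hj, Function.update_self, hxadj j hj]; omega
    · rw [heq hk, Function.update_self, adj_comm, hxadj k hk]; omega
    · simp

lemma IsInducedPathSeq.nonempty_iso {w : ℕ → V} {m : ℕ} (hw : IsInducedPathSeq G w m)
    (hsurj : w '' Set.Iic m = Set.univ) : Nonempty (G ≃g pathGraph (m + 1)) := by
  have hbij : Function.Bijective (fun i : Fin (m + 1) => w i) := by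
    refine ⟨fun i j hij => Fin.ext (hw.1 i.is_le j.is_le hij), fun u => ?_⟩
    obtain ⟨i, hi, rfl⟩ := hsurj.symm.subset (Set.mem_univ u)
    exact ⟨⟨i, Nat.lt_succ_of_le hi⟩, rfl⟩
  refine ⟨RelIso.symm ⟨Equiv.ofBijective _ hbij, fun {i j} => ?_⟩⟩
  simp only [Equiv.ofBijective_apply, pathGraph_adj]
  exact hw.2 i i.is_le j j.is_le

end InducedPath

section SingleVertex

variable {G : SimpleGraph V}

lemma zfStep_eq_or_eq_insert {C : Set V} {u : V} (hu : u ∈ C)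
    (hclosed : ∀ v ∈ C, v ≠ u → G.neighborSet v ⊆ C) :
    zfStep G C = C ∨ ∃ x ∉ C, G.neighborSet u \ C = {x} ∧ zfStep G C = insert x C := by
  have forced_by_u :
      ∀ v ∈ C, ∀ y, G.neighborSet v \ C = {y} → G.neighborSet u \ C = {y} := by
    intro v hv y hvy
    obtain rfl | hne := eq_or_ne v u
    · exact hvy
    · have hy : y ∈ G.neighborSet v \ C := hvy ▸ rfl
      exact absurd (hclosed v hv hne hy.1) hy.2
  by_cases hx : ∃ x, G.neighborSet u \ C = {x}
  · obtain ⟨x, hux⟩ := hx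
    refine Or.inr ⟨x, (hux.symm.subset rfl).2, hux, Set.Subset.antisymm ?_ ?_⟩
    · rintro y (hy | ⟨v, hv, hvy⟩)
      · exact Or.inr hy
      · exact Or.inl (Set.singleton_eq_singleton_iff.mp ((forced_by_u v hv y hvy).symm.trans hux))
    · rintro y (rfl | hy)
      · exact Or.inr ⟨u, hu, hux⟩
      · exact Or.inl hy
  · refine Or.inl (Set.Subset.antisymm ?_ Set.subset_union_left)
    rintro y (hy | ⟨v, hv, hvy⟩)
    · exact hy
    · exact absurd ⟨y, forced_by_u v hv y hvy⟩ hx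

def IsForcedPath (G : SimpleGraph V) (C : Set V) : Prop :=
  ∃ m w, IsInducedPathSeq G w m ∧ w '' Set.Iic m = C ∧ ∀ j < m, G.neighborSet (w j) ⊆ C

lemma isForcedPath_singleton (v : V) : IsForcedPath G {v} := by
  refine ⟨0, fun _ => v, ⟨fun i hi j hj _ => ?_, fun j hj k hk => ?_⟩, ?_, fun j hj => ?_⟩
  · simp_all
  · simp_all
  · simp
  · omega

lemma IsForcedPath.zfStep {C : Set V} (hC : IsForcedPath G C) : IsForcedPath G (zfStep G C) := by
  obtain ⟨m, w, hw, rfl, hclosed⟩ := hC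
  have hclosed' : ∀ v ∈ w '' Set.Iic m, v ≠ w m → G.neighborSet v ⊆ w '' Set.Iic m := by
    rintro _ ⟨j, hj, rfl⟩ hne
    exact hclosed j (hj.lt_of_ne (ne_of_apply_ne w hne))
  rcases zfStep_eq_or_eq_insert (Set.mem_image_of_mem w Set.self_mem_Iic) hclosed'
    with heq | ⟨x, hx, hmx, heq⟩
  · rw [heq]; exact ⟨m, w, hw, rfl, hclosed⟩
  have hxnbr : x ∈ G.neighborSet (w m) := (hmx.symm.subset rfl).1
  have hxadj : ∀ j ≤ m, (G.Adj (w j) x ↔ j = m) := fun j hj =>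
    ⟨fun hjx => by_contra fun hne => hx (hclosed j (lt_of_le_of_ne hj hne) hjx),
      fun hjm => hjm ▸ hxnbr⟩
  rw [heq]
  refine ⟨m + 1, Function.update w (m + 1) x, hw.update_succ hx hxadj,
    image_update_Iic_succ w m x, fun j hj => ?_⟩
  rw [eqOn_update_succ_Iic w m x (Nat.le_of_lt_succ hj)]
  obtain hj | rfl := Nat.lt_succ_iff_lt_or_eq.mp hj
  · exact (hclosed j hj).trans (Set.subset_insert x _)
  · intro y hy
    by_cases hyC : y ∈ w '' Set.Iic j
    · exact Set.mem_insert_of_mem x hyC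
    · exact Or.inl (hmx.subset ⟨hy, hyC⟩)

lemma IsForcingSet.exists_iso_pathGraph {v : V} (hv : IsForcingSet G {v}) :
    ∃ m, Nonempty (G ≃g pathGraph m) := by
  have hpath (n : ℕ) : IsForcedPath G ((zfStep G)^[n] {v}) := by
    induction n with
    | zero => exact isForcedPath_singleton v
    | succ n ih => rw [Function.iterate_succ_apply']; exact ih.zfStep
  obtain ⟨n, hn⟩ := hv
  obtain ⟨m, w, hw, himage, -⟩ := hpath n
  exact ⟨m + 1, hw.nonempty_iso (himage.trans hn)⟩

end SingleVertex

section Domination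

variable {W : Type*} {H : SimpleGraph W}

lemma SimpleGraph.Connected.exists_adj_dist_add_one_eq (hH : H.Connected) {u r : W}
    (hne : u ≠ r) : ∃ y, H.Adj u y ∧ H.dist y r + 1 = H.dist u r := by
  obtain ⟨p, hp⟩ := (hH u r).exists_walk_length_eq_dist
  cases p with
  | nil => exact absurd rfl hne
  | @cons _ y _ huy q =>
    refine ⟨y, huy, le_antisymm ?_ ?_⟩
    · have := dist_le q
      simp only [Walk.length_cons] at hp
      omega
    · have := hH.dist_triangle (u := u) (v := y) (w := r)
      rw [dist_eq_one_iff_adj.mpr huy] at this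
      omega

lemma SimpleGraph.Connected.exists_adj_even_dist_iff_not [Nontrivial W] (hH : H.Connected)
    (r w : W) : ∃ y, H.Adj w y ∧ (Even (H.dist y r) ↔ ¬Even (H.dist w r)) := by
  obtain rfl | hne := eq_or_ne w r
  · obtain ⟨u, hu⟩ := exists_ne w
    obtain ⟨y, hwy, -⟩ := hH.exists_adj_dist_add_one_eq hu.symm
    refine ⟨y, hwy, ?_⟩
    simp [dist_eq_one_iff_adj.mpr hwy.symm]
  · obtain ⟨y, hwy, hdist⟩ := hH.exists_adj_dist_add_one_eq hne
    exact ⟨y, hwy, by rw [← hdist, Nat.even_add_one, not_not]⟩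

lemma closedNbhd_eq_univ_of_forall_exists_adj {D : Set W}
    (h : ∀ w, ∃ y, H.Adj w y ∧ (y ∈ D ↔ w ∉ D)) : closedNbhd H D = Set.univ := by
  refine Set.eq_univ_of_forall fun w => ?_
  by_cases hw : w ∈ D
  · exact Or.inl hw
  · obtain ⟨y, hwy, hy⟩ := h w
    exact Or.inr ⟨y, hy.mpr hw, hwy.symm⟩

lemma SimpleGraph.Connected.exists_closedNbhd_eq_univ_two_mul_ncard_le [Finite W]
    [Nontrivial W] (hH : H.Connected) :
    ∃ D : Set W, closedNbhd H D = Set.univ ∧ 2 * D.ncard ≤ Nat.card W := by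
  obtain ⟨r⟩ := ‹Nontrivial W›.to_nonempty
  set E : Set W := {u | Even (H.dist u r)}
  have hE : closedNbhd H E = Set.univ := closedNbhd_eq_univ_of_forall_exists_adj
    (hH.exists_adj_even_dist_iff_not r)
  have hEc : closedNbhd H Eᶜ = Set.univ := closedNbhd_eq_univ_of_forall_exists_adj fun w => by
    obtain ⟨y, hwy, hy⟩ := hH.exists_adj_even_dist_iff_not r w
    exact ⟨y, hwy, by simp [E, hy]⟩
  have hcard := Set.ncard_add_ncard_compl E
  rcases le_total E.ncard Eᶜ.ncard with h | h
  · exact ⟨E, hE, by omega⟩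
  · exact ⟨Eᶜ, hEc, by omega⟩

end Domination

lemma SimpleGraph.Hom.image_closedNbhd_subset {W : Type*} {H : SimpleGraph W}
    {G : SimpleGraph V} (f : H →g G) (D : Set W) :
    f '' closedNbhd H D ⊆ closedNbhd G (f '' D) := by
  rintro _ ⟨w, hw | ⟨d, hd, hdw⟩, rfl⟩
  · exact Or.inl (Set.mem_image_of_mem f hw)
  · exact Or.inr ⟨f d, Set.mem_image_of_mem f hd, f.map_adj hdw⟩

lemma IsConnForcingSet.two_mul_powerDomNumber_le_ncard {G : SimpleGraph V} {S : Set V}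
    (hS : IsConnForcingSet G S) (hS₁ : 1 < S.ncard) : 2 * powerDomNumber G ≤ S.ncard := by
  obtain ⟨hnontriv, hfin⟩ := Set.one_lt_ncard_iff_nontrivial_and_finite.mp hS₁
  have : Finite S := hfin
  have : Nontrivial S := Set.nontrivial_coe_sort.mpr hnontriv
  obtain ⟨D, hD, hDcard⟩ := hS.2.exists_closedNbhd_eq_univ_two_mul_ncard_le
  let f := (Embedding.induce (G := G) S).toHom
  have hSD : S ⊆ closedNbhd G (f '' D) := by
    have := f.image_closedNbhd_subset D
    rwa [hD, Set.image_univ, show Set.range f = S from Subtype.range_coe] at this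
  have hPD := powerDomNumber_le_ncard (hS.1.isPowerDominating hSD)
  rw [Set.ncard_image_of_injective (f := f) D Subtype.val_injective] at hPD
  rw [Nat.card_coe_set_eq] at hDcard
  omega

theorem two_mul_powerDomNumber_le_connForcingNumber_general {V : Type*} [Fintype V]
    (G : SimpleGraph V) (hG : G.Connected)
    (hpath : ∀ m : ℕ, IsEmpty (G ≃g SimpleGraph.pathGraph m)) :
    2 * powerDomNumber G ≤ connForcingNumber G := by
  obtain ⟨S, hS, hcard⟩ := exists_isConnForcingSet_ncard_eq hG
  rw [← hcard]
  rcases lt_or_ge 1 S.ncard with hS₁ | hS₁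
  · exact hS.two_mul_powerDomNumber_le_ncard hS₁
  · have hSne : S.Nonempty := Set.nonempty_coe_sort.mp hS.2.nonempty
    obtain ⟨v, rfl⟩ := Set.ncard_eq_one.mp (hS₁.antisymm ((Set.ncard_pos).mpr hSne))
    obtain ⟨m, ⟨e⟩⟩ := hS.1.exists_iso_pathGraph
    exact (hpath m).elim e

/-- If `G` is a connected graph of order at least `3` that is not a path, then
`γ_P(G) ≤ F_c(G)/2`, i.e. `2 γ_P(G) ≤ F_c(G)`. -/
theorem two_mul_powerDomNumber_le_connForcingNumber {V : Type*} [Fintype V]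
    (G : SimpleGraph V) (hG : G.Connected) (hcard : 3 ≤ Fintype.card V)
    (hpath : ∀ m : ℕ, IsEmpty (G ≃g SimpleGraph.pathGraph m)) :
    2 * powerDomNumber G ≤ connForcingNumber G :=
  two_mul_powerDomNumber_le_connForcingNumber_general G hG hpath
end

section
/- If G is a 2-connected graph of order n with girth g, then F_c(G) ≤ n − g + 2. -/
open SimpleGraph

variable {V : Type*}

/-- `G` is 2-connected: it has at least 3 vertices, is connected, and removing
any single vertex leaves a connected graph. -/
def TwoConnected (G : SimpleGraph V) [Fintype V] : Prop :=
  3 ≤ Fintype.card V ∧ G.Connected ∧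
    ∀ v : V, (G.induce ({v}ᶜ : Set V)).Connected

/-! ### Auxiliary infrastructure -/

/-- Reachability within a set: a walk whose support stays in `S`. -/
def ReachIn (G : SimpleGraph V) (S : Set V) (a b : V) : Prop :=
  ∃ w : G.Walk a b, ∀ x ∈ w.support, x ∈ S

/-- Walk-connectivity of a set. -/
def WConn (G : SimpleGraph V) (S : Set V) : Prop :=
  S.Nonempty ∧ ∀ a ∈ S, ∀ b ∈ S, ReachIn G S a b

namespace ReachIn

variable {G : SimpleGraph V} {S T : Set V} {a b c : V}

lemma refl (ha : a ∈ S) : ReachIn G S a a :=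
  ⟨Walk.nil, by simp [ha]⟩

lemma symm (h : ReachIn G S a b) : ReachIn G S b a := by
  obtain ⟨w, hw⟩ := h
  exact ⟨w.reverse, by simpa using hw⟩

lemma trans (h1 : ReachIn G S a b) (h2 : ReachIn G S b c) : ReachIn G S a c := by
  obtain ⟨w1, hw1⟩ := h1
  obtain ⟨w2, hw2⟩ := h2
  refine ⟨w1.append w2, ?_⟩
  intro x hx
  rw [Walk.mem_support_append_iff] at hx
  exact hx.elim (hw1 x) (hw2 x)

lemma mono (hST : S ⊆ T) (h : ReachIn G S a b) : ReachIn G T a b := by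
  obtain ⟨w, hw⟩ := h
  exact ⟨w, fun x hx => hST (hw x hx)⟩

lemma of_adj (hab : G.Adj a b) (ha : a ∈ S) (hb : b ∈ S) : ReachIn G S a b := by
  refine ⟨Walk.cons hab Walk.nil, ?_⟩
  intro x hx
  simp only [Walk.support_cons, Walk.support_nil, List.mem_cons, List.mem_singleton] at hx
  rcases hx with rfl | rfl | h
  · exact ha
  · exact hb
  · simp at h

lemma mem_left (h : ReachIn G S a b) : a ∈ S := by
  obtain ⟨w, hw⟩ := h; exact hw a w.start_mem_support

lemma mem_right (h : ReachIn G S a b) : b ∈ S := by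
  obtain ⟨w, hw⟩ := h; exact hw b w.end_mem_support

end ReachIn

lemma wconn_of_pivot {G : SimpleGraph V} {S : Set V} {v : V} (hv : v ∈ S)
    (h : ∀ a ∈ S, ReachIn G S a v) : WConn G S :=
  ⟨⟨v, hv⟩, fun a ha b hb => (h a ha).trans (h b hb).symm⟩

lemma wconn_singleton (G : SimpleGraph V) (v : V) : WConn G {v} :=
  wconn_of_pivot rfl (by rintro a rfl; exact ReachIn.refl rfl)

/-- Bridge to `induce` connectivity. -/
lemma wconn_iff_induce_connected {G : SimpleGraph V} {S : Set V} :
    WConn G S ↔ (G.induce S).Connected := by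
  rw [connected_induce_iff, Subgraph.connected_iff_forall_exists_walk_subgraph]
  constructor
  · rintro ⟨hne, h⟩
    refine ⟨by simpa using hne, ?_⟩
    intro u v hu hv
    simp only [Subgraph.induce_verts, Subgraph.verts_top] at hu hv
    obtain ⟨w, hw⟩ := h u hu v hv
    refine ⟨w, ?_⟩
    have h1 : w.toSubgraph ≤ (⊤ : G.Subgraph).induce {x | x ∈ w.support} := by
      rw [← w.verts_toSubgraph]
      exact Subgraph.le_induce_top_verts
    refine h1.trans (Subgraph.induce_mono le_rfl ?_)
    intro x hx
    exact hw x hx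
  · rintro ⟨hne, h⟩
    refine ⟨by simpa using hne, ?_⟩
    intro a ha b hb
    obtain ⟨w, hw⟩ := h (by simpa using ha) (by simpa using hb)
    refine ⟨w, ?_⟩
    intro x hx
    have hx' : x ∈ w.toSubgraph.verts := by rw [w.verts_toSubgraph]; exact hx
    have := hw.1 hx'
    simpa using this

/-- First crossing of the boundary of `D` along a walk. -/
lemma exists_crossing {G : SimpleGraph V} {D : Set V} :
    ∀ {a b : V} (w : G.Walk a b), a ∈ D → b ∉ D →
    ∃ y x, y ∈ D ∧ x ∉ D ∧ G.Adj y x ∧ x ∈ w.support := by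
  intro a b w
  induction w with
  | nil => exact fun ha hb => absurd ha hb
  | @cons u c v h p ih =>
    intro ha hb
    by_cases hc : c ∈ D
    · obtain ⟨y, x, h1, h2, h3, h4⟩ := ih hc hb
      exact ⟨y, x, h1, h2, h3, by simp [h4]⟩
    · exact ⟨u, c, ha, hc, h, by simp⟩

/-- Truncate/divert a walk to `m` so that it avoids a "closed" region `D`. -/
lemma reach_avoid {G : SimpleGraph V} {D K : Set V} : ∀ {y m : V} (w : G.Walk y m),
    (∀ p ∈ D, ∀ q, q ∈ K → q ≠ m → G.Adj p q → q ∈ D) → m ∉ D → y ∉ D →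
    (∀ x ∈ w.support, x ∈ K) → ReachIn G (K \ D) y m := by
  intro y m w
  induction w with
  | nil =>
    intro _ hm _ hw
    exact ⟨Walk.nil, by simpa using ⟨hw _ (by simp), hm⟩⟩
  | @cons u c v h p ih =>
    intro hclosed hm hy hw
    by_cases huc : u = v
    · subst huc
      exact ⟨Walk.nil, by simpa using ⟨hw _ (by simp), hy⟩⟩
    · have hcD : c ∉ D := by
        intro hcD
        exact hy (hclosed c hcD u (hw u (by simp)) huc h.symm)
      obtain ⟨q, hq⟩ := ih hclosed hm hcD (fun x hx => hw x (by simp [hx]))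
      refine ⟨Walk.cons h q, ?_⟩
      intro x hx
      simp only [Walk.support_cons, List.mem_cons] at hx
      rcases hx with rfl | hx
      · exact ⟨hw x (by simp), hy⟩
      · exact hq x hx

/-- A walk inside `T` starting in a region `D` closed under adjacency in `T`
stays in `D`. -/
lemma walk_support_closed {G : SimpleGraph V} {D T : Set V} :
    ∀ {a b : V} (w : G.Walk a b), a ∈ D →
    (∀ p ∈ D, ∀ q, q ∈ T → G.Adj p q → q ∈ D) →
    (∀ x ∈ w.support, x ∈ T) → ∀ x ∈ w.support, x ∈ D := by
  intro a b w
  induction w with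
  | nil =>
    intro ha _ _ x hx
    simp only [Walk.support_nil, List.mem_singleton] at hx
    exact hx ▸ ha
  | @cons u c v h p ih =>
    intro ha hcl hT x hx
    have hc : c ∈ D := hcl u ha c (hT c (by simp)) h
    simp only [Walk.support_cons, List.mem_cons] at hx
    rcases hx with rfl | hx
    · exact ha
    · exact ih hc hcl (fun z hz => hT z (by simp [hz])) x hx

/-- From a vertex outside `A` adjacent to two distinct vertices of a small connected
set `A`, a short cycle arises: contradiction with girth. -/
lemma no_short_cycle_tool {G : SimpleGraph V} {A : Set V} {g : ℕ} (hA : A.Finite)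
    (hgirth : ∀ (c : V) (w : G.Walk c c), w.IsCycle → g ≤ w.length)
    (hcard : A.ncard + 2 ≤ g) {x a b : V} (hx : x ∉ A) (hab : a ≠ b)
    (hxa : G.Adj x a) (hxb : G.Adj x b) (hr : ReachIn G A a b) : False := by
  classical
  obtain ⟨w, hw⟩ := hr
  set p := w.bypass with hp
  have hpath : p.IsPath := w.bypass_isPath
  have hsupp : ∀ y ∈ p.support, y ∈ A := fun y hy => hw y (w.support_bypass_subset hy)
  have hxp : x ∉ p.support := fun h => hx (hsupp x h)
  have hr' : (Walk.cons hxa p).IsPath := hpath.cons hxp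
  have hcyc : (Walk.cons hxb.symm (Walk.cons hxa p)).IsCycle := by
    rw [Walk.cons_isCycle_iff]
    refine ⟨hr', ?_⟩
    simp only [Walk.edges_cons, List.mem_cons]
    rintro (h | h)
    · rw [Sym2.eq_iff] at h
      rcases h with ⟨h1, h2⟩ | ⟨h1, h2⟩
      · exact G.irrefl (by rwa [h1] at hxb)
      · exact hab h1.symm
    · exact hxp (p.snd_mem_support_of_mem_edges h)
  have hlen := hgirth _ _ hcyc
  simp only [Walk.length_cons] at hlen
  have hnodup : p.support.Nodup := hpath.support_nodup
  have hle : p.support.length ≤ A.ncard := by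
    have h1 : p.support.toFinset.card = p.support.length := List.toFinset_card_of_nodup hnodup
    have h2 : p.support.toFinset ⊆ hA.toFinset := by
      intro y hy
      rw [List.mem_toFinset] at hy
      rw [Set.Finite.mem_toFinset]
      exact hsupp y hy
    have h3 := Finset.card_le_card h2
    rw [Set.ncard_eq_toFinset_card A hA]
    omega
  have hsl : p.support.length = p.length + 1 := by
    rw [Walk.length_support]
  omega

lemma adj_of_reachable_ne {W : Type*} {H : SimpleGraph W} {a b : W}
    (h : H.Reachable a b) (hne : a ≠ b) : ∃ c, H.Adj a c := by
  obtain ⟨w⟩ := h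
  cases w with
  | nil => exact absurd rfl hne
  | cons h p => exact ⟨_, h⟩

/-- In a 2-connected graph every vertex has a neighbor distinct from any given vertex. -/
lemma exists_adj_ne {G : SimpleGraph V} [Fintype V] (h3 : 3 ≤ Fintype.card V)
    (hconn : G.Connected)
    (hv : ∀ v : V, (G.induce ({v}ᶜ : Set V)).Connected) (a u : V) :
    ∃ x, G.Adj a x ∧ x ≠ u := by
  classical
  by_cases hau : a = u
  · subst hau
    obtain ⟨b, hb⟩ := Fintype.exists_ne_of_one_lt_card (by omega) a
    obtain ⟨c, hc⟩ := adj_of_reachable_ne (hconn.preconnected a b) (Ne.symm hb)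
    exact ⟨c, hc, hc.ne'⟩
  · have hw : ∃ w : V, w ≠ a ∧ w ≠ u := by
      by_contra hcon
      push_neg at hcon
      have hsub : (Finset.univ : Finset V) ⊆ {a, u} := by
        intro w _
        simp only [Finset.mem_insert, Finset.mem_singleton]
        by_cases h1 : w = a
        · exact Or.inl h1
        · exact Or.inr (hcon w h1)
      have := Finset.card_le_card hsub
      have h2 : ({a, u} : Finset V).card ≤ 2 := Finset.card_insert_le _ _ |>.trans (by simp)
      rw [Finset.card_univ] at this
      omega
    obtain ⟨w, hwa, hwu⟩ := hw
    have ha' : a ∈ ({u}ᶜ : Set V) := by simpa using hau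
    have hw' : w ∈ ({u}ᶜ : Set V) := by simpa using hwu
    have hne : (⟨a, ha'⟩ : ({u}ᶜ : Set V)) ≠ ⟨w, hw'⟩ := by
      simp only [ne_eq, Subtype.mk.injEq]
      exact fun h => hwa h.symm
    obtain ⟨c, hc⟩ := adj_of_reachable_ne ((hv u).preconnected ⟨a, ha'⟩ ⟨w, hw'⟩) hne
    refine ⟨c.1, hc, ?_⟩
    have h2 := c.2
    simp only [Set.mem_compl_iff, Set.mem_singleton_iff] at h2
    exact h2

/-- A finite connected set with at least two elements has a removable vertex. -/
lemma exists_removable {G : SimpleGraph V} {A : Set V} [Fintype V]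
    (hW : WConn G A) (h2 : 1 < A.ncard) :
    ∃ a ∈ A, WConn G (A \ {a}) := by
  classical
  obtain ⟨⟨v, hv⟩, hreach⟩ := hW
  set L : V → Set ℕ := fun y => {n | ∃ w : G.Walk v y, (∀ x ∈ w.support, x ∈ A) ∧ w.length = n}
    with hL
  have hLne : ∀ y ∈ A, (L y).Nonempty := by
    intro y hy
    obtain ⟨w, hw⟩ := hreach v hv y hy
    exact ⟨w.length, w, hw, rfl⟩
  set d : V → ℕ := fun y => sInf (L y) with hd
  have hdspec : ∀ y ∈ A, ∃ w : G.Walk v y, (∀ x ∈ w.support, x ∈ A) ∧ w.length = d y :=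
    fun y hy => Nat.sInf_mem (hLne y hy)
  have hdle : ∀ y, ∀ w : G.Walk v y, (∀ x ∈ w.support, x ∈ A) → d y ≤ w.length :=
    fun y w hw => Nat.sInf_le ⟨w, hw, rfl⟩
  have hdv : d v = 0 := Nat.le_zero.mp (hdle v Walk.nil (by simpa using hv))
  have hAfin : A.Finite := A.toFinite
  obtain ⟨a, haA, hamax⟩ := Set.exists_max_image A d hAfin ⟨v, hv⟩
  have hone : ∃ y ∈ A, y ≠ v := by
    rw [Set.one_lt_ncard_iff hAfin] at h2
    obtain ⟨p, q, hp, hq, hpq⟩ := h2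
    by_cases h1 : p = v
    · exact ⟨q, hq, fun h => hpq (h1.trans h.symm)⟩
    · exact ⟨p, hp, h1⟩
  have hdpos : ∀ y ∈ A, y ≠ v → 1 ≤ d y := by
    intro y hy hyv
    by_contra hcon
    push_neg at hcon
    interval_cases h : d y
    · obtain ⟨w, hw, hlen⟩ := hdspec y hy
      rw [h] at hlen
      exact hyv (Walk.eq_of_length_eq_zero hlen).symm
  have hav : a ≠ v := by
    obtain ⟨y, hy, hyv⟩ := hone
    intro h
    have := (hdpos y hy hyv).trans (hamax y hy)
    rw [h, hdv] at this
    omega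
  refine ⟨a, haA, wconn_of_pivot (v := v) ⟨hv, by simpa using (Ne.symm hav)⟩ ?_⟩
  rintro y ⟨hyA, hya⟩
  simp only [Set.mem_singleton_iff] at hya
  obtain ⟨w, hw, hlen⟩ := hdspec y hyA
  have hanot : a ∉ w.support := by
    intro hasup
    have hspec := w.take_spec hasup
    have hlen2 : (w.takeUntil a hasup).length + (w.dropUntil a hasup).length = w.length := by
      have := congrArg Walk.length hspec
      rwa [Walk.length_append] at this
    have hdrop : 1 ≤ (w.dropUntil a hasup).length := by
      rcases Nat.eq_zero_or_pos (w.dropUntil a hasup).length with h0 | h1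
      · exact absurd (Walk.eq_of_length_eq_zero h0) (Ne.symm hya)
      · exact h1
    have hda : d a ≤ (w.takeUntil a hasup).length :=
      hdle a _ (fun x hx => hw x (w.support_takeUntil_subset hasup hx))
    have hmax := hamax y hyA
    omega
  refine ⟨w.reverse, fun x hx => ?_⟩
  rw [Walk.support_reverse, List.mem_reverse] at hx
  refine ⟨hw x hx, ?_⟩
  intro hxa
  rw [Set.mem_singleton_iff] at hxa
  subst hxa
  exact hanot hx

lemma subset_zfStep (G : SimpleGraph V) (S : Set V) : S ⊆ zfStep G S :=
  Set.subset_union_left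

lemma zfStep_mono {G : SimpleGraph V} {S T : Set V} (hST : S ⊆ T) :
    zfStep G S ⊆ zfStep G T := by
  rintro w (hw | ⟨v, hv, hvw⟩)
  · exact Or.inl (hST hw)
  · by_cases hwT : w ∈ T
    · exact Or.inl hwT
    · refine Or.inr ⟨v, hST hv, ?_⟩
      apply Set.eq_singleton_iff_unique_mem.mpr
      constructor
      · have hwmem : w ∈ G.neighborSet v \ S := by rw [hvw]; rfl
        exact ⟨hwmem.1, hwT⟩
      · intro y hy
        have : y ∈ G.neighborSet v \ S := ⟨hy.1, fun hyS => hy.2 (hST hyS)⟩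
        rw [hvw] at this
        exact this

lemma zfStep_iterate_mono {G : SimpleGraph V} {S T : Set V} (k : ℕ) (hST : S ⊆ T) :
    (zfStep G)^[k] S ⊆ (zfStep G)^[k] T := by
  induction k generalizing S T with
  | zero => exact hST
  | succ n ih =>
    rw [Function.iterate_succ_apply, Function.iterate_succ_apply]
    exact ih (zfStep_mono hST)

/-- The forcing process, started outside a small connected set, colors everything. -/
lemma force_clear {G : SimpleGraph V} [Fintype V] {g : ℕ}
    (hgirth : ∀ (c : V) (w : G.Walk c c), w.IsCycle → g ≤ w.length)
    (h3 : 3 ≤ Fintype.card V) (hconn : G.Connected)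
    (hv2 : ∀ v : V, (G.induce ({v}ᶜ : Set V)).Connected) :
    ∀ k (A : Set V), A.ncard = k → k + 2 ≤ g → (A = ∅ ∨ WConn G A) →
      ∃ m, (zfStep G)^[m] Aᶜ = Set.univ := by
  intro k
  induction k using Nat.strong_induction_on with
  | _ k ih =>
    intro A hcard hk hWc
    rcases hWc with rfl | hW
    · exact ⟨0, by simp⟩
    have hAfin : A.Finite := A.toFinite
    have hApos : 0 < A.ncard := by
      obtain ⟨v, hv⟩ := hW.1
      exact (Set.ncard_pos hAfin).mpr ⟨v, hv⟩
    -- find a removable vertex `a` and a forcing source `x`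
    have key : ∃ a ∈ A, (A \ {a} = ∅ ∨ WConn G (A \ {a})) ∧
        ∃ x, x ∉ A ∧ G.neighborSet x \ Aᶜ = {a} := by
      rcases Nat.lt_or_ge 1 A.ncard with h2 | h1
      · -- |A| ≥ 2
        obtain ⟨a, haA, haW⟩ := exists_removable hW h2
        have hsub : A \ {a} ⊆ A := Set.diff_subset
        have huniq : ∀ u1 ∈ A \ {a}, ∀ u2 ∈ A \ {a}, G.Adj a u1 → G.Adj a u2 → u1 = u2 := by
          intro u1 hu1 u2 hu2 hau1 hau2
          by_contra hne
          refine no_short_cycle_tool (hAfin.subset hsub) hgirth ?_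
            (by simp : a ∉ A \ {a}) hne hau1 hau2 (haW.2 u1 hu1 u2 hu2)
          have : (A \ {a}).ncard < A.ncard := Set.ncard_diff_singleton_lt_of_mem haA hAfin
          omega
        have hx : ∃ x, G.Adj a x ∧ x ∉ A := by
          by_cases hnb : ∃ u ∈ A \ {a}, G.Adj a u
          · obtain ⟨u, hu, hau⟩ := hnb
            obtain ⟨x, hax, hxu⟩ := exists_adj_ne h3 hconn hv2 a u
            refine ⟨x, hax, fun hxA => ?_⟩
            have hxa : x ≠ a := hax.ne'
            exact hxu (huniq u hu x ⟨hxA, hxa⟩ hau hax).symm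
          · obtain ⟨x, hax, _⟩ := exists_adj_ne h3 hconn hv2 a a
            refine ⟨x, hax, fun hxA => ?_⟩
            exact hnb ⟨x, ⟨hxA, hax.ne'⟩, hax⟩
        obtain ⟨x, hax, hxA⟩ := hx
        refine ⟨a, haA, Or.inr haW, x, hxA, ?_⟩
        ext y
        simp only [Set.mem_diff, mem_neighborSet, Set.mem_compl_iff, not_not,
          Set.mem_singleton_iff]
        constructor
        · rintro ⟨hxy, hyA⟩
          by_contra hya
          exact no_short_cycle_tool hAfin hgirth (by omega) hxA
            (fun h => hya h.symm) hax.symm hxy (hW.2 a haA y hyA)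
        · rintro rfl
          exact ⟨hax.symm, haA⟩
      · -- |A| = 1
        have h1' : A.ncard = 1 := le_antisymm h1 hApos
        obtain ⟨a, rfl⟩ := Set.ncard_eq_one.mp h1'
        obtain ⟨x, hax, hxa⟩ := exists_adj_ne h3 hconn hv2 a a
        refine ⟨a, rfl, Or.inl (by simp), x, by simpa using hax.ne', ?_⟩
        ext y
        simp only [Set.mem_diff, mem_neighborSet, Set.mem_compl_iff, not_not,
          Set.mem_singleton_iff]
        constructor
        · rintro ⟨_, hyA⟩
          exact hyA
        · rintro rfl
          exact ⟨hax.symm, rfl⟩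
    obtain ⟨a, haA, hrem, x, hxA, hxkey⟩ := key
    have hstep : (A \ {a})ᶜ ⊆ zfStep G Aᶜ := by
      have hcompl : (A \ {a})ᶜ = Aᶜ ∪ {a} := by
        simp [Set.diff_eq, Set.compl_inter]
      rw [hcompl]
      rintro y (hy | hy)
      · exact subset_zfStep G Aᶜ hy
      · rw [Set.mem_singleton_iff] at hy
        subst hy
        exact Or.inr ⟨x, hxA, hxkey⟩
    have hcard' : (A \ {a}).ncard = k - 1 := by
      rw [Set.ncard_diff_singleton_of_mem haA, hcard]
    obtain ⟨m, hm⟩ := ih (k - 1) (by omega) (A \ {a}) hcard' (by omega) hrem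
    refine ⟨m + 1, ?_⟩
    have h1 : (zfStep G)^[m] ((A \ {a})ᶜ) ⊆ (zfStep G)^[m] (zfStep G Aᶜ) :=
      zfStep_iterate_mono m hstep
    rw [hm] at h1
    rw [Function.iterate_succ_apply]
    exact Set.eq_univ_of_univ_subset h1

/-- Key 2-connectivity lemma: one can always delete a vertex of `H = Rᶜ` adjacent
to `R`, keeping `H` connected. Strong induction on a "suspect zone" `K`. -/
lemma grow_inner {G : SimpleGraph V} [Fintype V]
    (hv2 : ∀ v : V, (G.induce ({v}ᶜ : Set V)).Connected)
    {H : Set V} (hHc : Hᶜ.Nonempty) :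
    ∀ k (K : Set V) (v0 : V), K.ncard = k → K ⊆ H → v0 ∈ K → WConn G K →
      WConn G ((H \ K) ∪ {v0}) →
      (∀ y ∈ H \ K, ∀ x ∈ K, G.Adj y x → x = v0) →
      (∃ m ∈ K \ {v0}, ∃ r ∉ H, G.Adj m r) →
      ∃ z ∈ H, (∃ r ∉ H, G.Adj z r) ∧ WConn G (H \ {z}) := by
  intro k
  induction k using Nat.strong_induction_on with
  | _ k ih =>
    intro K v0 hcard hKH hv0K hWK hWout hadj hmark
    obtain ⟨m, hmK'', r0, hr0, hmr0⟩ := hmark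
    obtain ⟨hmK, hmv0⟩ := hmK''
    have hmv0' : m ≠ v0 := by simpa using hmv0
    by_cases hcase : ∀ y ∈ K \ {m}, ReachIn G (K \ {m}) v0 y
    · -- `m` itself can be deleted
      have hv0Hm : v0 ∈ H \ {m} := ⟨hKH hv0K, by simpa using Ne.symm hmv0'⟩
      refine ⟨m, hKH hmK, ⟨r0, hr0, hmr0⟩, wconn_of_pivot (v := v0) hv0Hm ?_⟩
      intro y hy
      obtain ⟨hyH, hym⟩ := hy
      have hKmH : K \ {m} ⊆ H \ {m} := fun z hz => ⟨hKH hz.1, hz.2⟩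
      by_cases hyK : y ∈ K
      · exact ((hcase y ⟨hyK, hym⟩).symm).mono hKmH
      · have h1 : ReachIn G ((H \ K) ∪ {v0}) y v0 :=
          hWout.2 y (Or.inl ⟨hyH, hyK⟩) v0 (Or.inr rfl)
        refine h1.mono ?_
        rintro z (⟨hzH, hzK⟩ | hz)
        · refine ⟨hzH, ?_⟩
          intro h
          rw [Set.mem_singleton_iff] at h
          exact hzK (h ▸ hmK)
        · rw [Set.mem_singleton_iff] at hz
          subst hz
          exact hv0Hm
    · push_neg at hcase
      obtain ⟨d, hdKm, hdreach⟩ := hcase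
      set D : Set V := {y | y ∈ K \ {m} ∧ ReachIn G (K \ {m}) d y} with hD
      have hdD : d ∈ D := ⟨hdKm, ReachIn.refl hdKm⟩
      have hv0Km : v0 ∈ K \ {m} := ⟨hv0K, by simpa using Ne.symm hmv0'⟩
      have hv0D : v0 ∉ D := fun h => hdreach h.2.symm
      have hDsub : D ⊆ K \ {m} := fun y hy => hy.1
      have hDcl : ∀ p ∈ D, ∀ q, q ∈ K → q ≠ m → G.Adj p q → q ∈ D := by
        intro p hp q hqK hqm hpq
        have hq' : q ∈ K \ {m} := ⟨hqK, by simpa using hqm⟩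
        exact ⟨hq', hp.2.trans (ReachIn.of_adj hpq hp.1 hq')⟩
      have hmD : m ∉ D := fun h => h.1.2 rfl
      obtain ⟨wdm, hwdm⟩ := hWK.2 d hdKm.1 m hmK
      obtain ⟨y0, x0, hy0D, hx0D, hy0x0, hx0supp⟩ := exists_crossing (D := D) wdm hdD hmD
      have hx0K : x0 ∈ K := hwdm x0 hx0supp
      have hx0m : x0 = m := by
        by_contra hne
        exact hx0D (hDcl y0 hy0D x0 hx0K hne hy0x0)
      rw [hx0m] at hy0x0
      -- `D` contains a vertex adjacent to the outside of `H` (2-connectivity)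
      have hDmark : ∃ m' ∈ D, ∃ r ∉ H, G.Adj m' r := by
        by_contra hcon
        push_neg at hcon
        obtain ⟨r1, hr1⟩ := hHc
        have hr1' : r1 ∉ H := hr1
        have hWm : WConn G ({m}ᶜ : Set V) := wconn_iff_induce_connected.mpr (hv2 m)
        have hdm : d ∈ ({m}ᶜ : Set V) := hdKm.2
        have hr1m : r1 ∈ ({m}ᶜ : Set V) := by
          simp only [Set.mem_compl_iff, Set.mem_singleton_iff]
          rintro rfl
          exact hr1' (hKH hmK)
        obtain ⟨wdr, hwdr⟩ := hWm.2 d hdm r1 hr1m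
        have hr1D : r1 ∉ D := fun h => hr1' (hKH h.1.1)
        obtain ⟨y1, x1, hy1D, hx1D, hy1x1, hx1supp⟩ := exists_crossing wdr hdD hr1D
        have hx1m : x1 ≠ m := by
          have := hwdr x1 hx1supp
          simpa using this
        by_cases hx1H : x1 ∈ H
        · by_cases hx1K : x1 ∈ K
          · exact hx1D (hDcl y1 hy1D x1 hx1K hx1m hy1x1)
          · have hy1K : y1 ∈ K := (hDsub hy1D).1
            have := hadj x1 ⟨hx1H, hx1K⟩ y1 hy1K hy1x1.symm
            exact hv0D (this ▸ hy1D)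
        · exact hcon y1 hy1D x1 hx1H hy1x1
      obtain ⟨m', hm'D, hm'mark⟩ := hDmark
      -- recurse on `K' = D ∪ {m}` with distinguished vertex `m`
      set K' : Set V := D ∪ {m} with hK'
      have hK'K : K' ⊆ K := by
        rintro z (hz | hz)
        · exact (hDsub hz).1
        · rw [Set.mem_singleton_iff] at hz
          exact hz ▸ hmK
      have hv0K' : v0 ∉ K' := by
        rintro (h | h)
        · exact hv0D h
        · rw [Set.mem_singleton_iff] at h
          exact hmv0' h.symm
      have hssub : K' ⊂ K := ⟨hK'K, fun hsup => hv0K' (hsup hv0K)⟩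
      have hlt : K'.ncard < k := hcard ▸ Set.ncard_lt_ncard hssub K.toFinite
      have hDreach : ∀ y ∈ D, ReachIn G D d y := by
        intro y hy
        obtain ⟨w, hw⟩ := hy.2
        refine ⟨w, walk_support_closed (T := K \ {m}) w hdD ?_ hw⟩
        intro p hp q hq hpq
        exact hDcl p hp q hq.1 (by simpa using hq.2) hpq
      have hmK'mem : m ∈ K' := Or.inr rfl
      refine ih K'.ncard hlt K' m rfl (fun z hz => hKH (hK'K hz)) hmK'mem ?_ ?_ ?_ ?_
      · -- WConn K'
        refine wconn_of_pivot (v := m) hmK'mem ?_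
        rintro y (hyD | hym)
        · have ha : ReachIn G K' y d := ((hDreach y hyD).symm).mono Set.subset_union_left
          have hb : ReachIn G K' d y0 := (hDreach y0 hy0D).mono Set.subset_union_left
          have hc : ReachIn G K' y0 m := ReachIn.of_adj hy0x0 (Or.inl hy0D) hmK'mem
          exact (ha.trans hb).trans hc
        · rw [Set.mem_singleton_iff] at hym
          subst hym
          exact ReachIn.refl hmK'mem
      · -- WConn ((H \ K') ∪ {m})
        refine wconn_of_pivot (v := m) (Or.inr rfl) ?_
        intro y hy
        have hKD_sub : K \ D ⊆ (H \ K') ∪ {m} := by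
          intro z hz
          by_cases hzm : z = m
          · exact Or.inr (by simp [hzm])
          · refine Or.inl ⟨hKH hz.1, ?_⟩
            rintro (h | h)
            · exact hz.2 h
            · rw [Set.mem_singleton_iff] at h
              exact hzm h
        have hreach_vm : ∀ y' ∈ K, y' ∉ D → ReachIn G ((H \ K') ∪ {m}) y' m := by
          intro y' hy'K hy'D
          obtain ⟨w, hw⟩ := hWK.2 y' hy'K m hmK
          exact (reach_avoid (D := D) (K := K) w hDcl hmD hy'D hw).mono hKD_sub
        rcases hy with hy | hym
        · obtain ⟨hyH, hyK'⟩ := hy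
          by_cases hyK : y ∈ K
          · exact hreach_vm y hyK (fun h => hyK' (Or.inl h))
          · have h1 : ReachIn G ((H \ K) ∪ {v0}) y v0 :=
              hWout.2 y (Or.inl ⟨hyH, hyK⟩) v0 (Or.inr rfl)
            have hsub2 : (H \ K) ∪ {v0} ⊆ (H \ K') ∪ {m} := by
              rintro z (⟨hzH, hzK⟩ | hz)
              · exact Or.inl ⟨hzH, fun h => hzK (hK'K h)⟩
              · rw [Set.mem_singleton_iff] at hz
                subst hz
                exact Or.inl ⟨hKH hv0K, hv0K'⟩
            exact (h1.mono hsub2).trans (hreach_vm v0 hv0K hv0D)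
        · rw [Set.mem_singleton_iff] at hym
          subst hym
          exact ReachIn.refl (Or.inr rfl)
      · -- adjacency condition
        intro y hy x hx hyx
        rcases hx with hxD | hxm
        · exfalso
          obtain ⟨hyH, hyK'⟩ := hy
          by_cases hyK : y ∈ K
          · have hym : y ≠ m := fun h => hyK' (Or.inr (by simp [h]))
            exact hyK' (Or.inl (hDcl x hxD y hyK hym hyx.symm))
          · have := hadj y ⟨hyH, hyK⟩ x (hDsub hxD).1 hyx
            exact hv0D (this ▸ hxD)
        · rw [Set.mem_singleton_iff] at hxm
          exact hxm
      · -- marked vertex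
        refine ⟨m', ⟨Or.inl hm'D, ?_⟩, hm'mark⟩
        intro h
        rw [Set.mem_singleton_iff] at h
        exact hmD (h ▸ hm'D)

/-- One growth step: enlarge a connected set by a vertex, keeping the complement
connected. -/
lemma grow_step {G : SimpleGraph V} [Fintype V] (hconn : G.Connected)
    (hv2 : ∀ v : V, (G.induce ({v}ᶜ : Set V)).Connected)
    {R : Set V} (hR : R.Nonempty) (hHW : WConn G (Rᶜ : Set V)) (hH2 : 2 ≤ Rᶜ.ncard) :
    ∃ z ∈ (Rᶜ : Set V), (∃ r ∈ R, G.Adj z r) ∧ WConn G (Rᶜ \ {z}) := by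
  classical
  -- a vertex of `Rᶜ` adjacent to `R`
  obtain ⟨r1, hr1⟩ := hR
  obtain ⟨h1, hh1⟩ := hHW.1
  obtain ⟨w⟩ := hconn.preconnected r1 h1
  obtain ⟨y, m, hyR, hmR, hym, _⟩ :=
    exists_crossing (D := R) w hr1 (by simpa using hh1)
  have hmH : m ∈ (Rᶜ : Set V) := hmR
  -- a second vertex of `Rᶜ`
  have hv0 : ∃ v0 ∈ (Rᶜ : Set V), v0 ≠ m := by
    have h2' : 1 < Rᶜ.ncard := hH2
    rw [Set.one_lt_ncard_iff (Rᶜ.toFinite)] at h2'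
    obtain ⟨p, q, hp, hq, hpq⟩ := h2'
    by_cases h1 : p = m
    · exact ⟨q, hq, fun h => hpq (h1.trans h.symm)⟩
    · exact ⟨p, hp, h1⟩
  obtain ⟨v0, hv0H, hv0m⟩ := hv0
  have hHc : ((Rᶜ : Set V))ᶜ.Nonempty := by
    rw [compl_compl]
    exact ⟨r1, hr1⟩
  obtain ⟨z, hzH, ⟨r, hrH, hzr⟩, hWz⟩ :=
    grow_inner hv2 hHc (Rᶜ.ncard) (Rᶜ) v0 rfl le_rfl hv0H hHW
      (by
        rw [Set.diff_self, Set.empty_union]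
        exact wconn_singleton G v0)
      (by
        intro y hy
        rw [Set.diff_self] at hy
        exact absurd hy (Set.notMem_empty y))
      ⟨m, ⟨hmH, by simp only [Set.mem_singleton_iff]; exact fun h => hv0m h.symm⟩, y, by simpa using hyR, hym.symm⟩
  exact ⟨z, hzH, ⟨r, by simpa using hrH, hzr⟩, hWz⟩

/-- Growing a connected set with connected complement to any size. -/
lemma grow_full {G : SimpleGraph V} [Fintype V] (hconn : G.Connected)
    (hv2 : ∀ v : V, (G.induce ({v}ᶜ : Set V)).Connected) :
    ∀ t, 1 ≤ t → t + 2 ≤ Fintype.card V →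
      ∃ R : Set V, R.ncard = t ∧ WConn G R ∧ WConn G (Rᶜ : Set V) := by
  intro t
  induction t with
  | zero => omega
  | succ n ihn =>
    intro h1 h2
    by_cases hn : n = 0
    · subst hn
      obtain ⟨v⟩ := hconn.nonempty
      refine ⟨{v}, by simp, wconn_singleton G v, ?_⟩
      exact wconn_iff_induce_connected.mpr (hv2 v)
    · obtain ⟨R, hRc, hRW, hHW⟩ := ihn (by omega) (by omega)
      have hcompl := Set.ncard_add_ncard_compl R
      rw [Nat.card_eq_fintype_card] at hcompl
      have hH2 : 2 ≤ Rᶜ.ncard := by omega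
      have hRne : R.Nonempty := Set.nonempty_of_ncard_ne_zero (by omega)
      obtain ⟨z, hzH, ⟨r, hrR, hzr⟩, hWz⟩ := grow_step hconn hv2 hRne hHW hH2
      have hzR : z ∉ R := hzH
      refine ⟨insert z R, ?_, ?_, ?_⟩
      · rw [Set.ncard_insert_of_notMem hzR R.toFinite, hRc]
      · refine wconn_of_pivot (v := r) (Set.mem_insert_of_mem z hrR) ?_
        intro a ha
        rcases Set.mem_insert_iff.mp ha with rfl | haR
        · exact ReachIn.of_adj hzr (Set.mem_insert a R) (Set.mem_insert_of_mem a hrR)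
        · exact (hRW.2 a haR r hrR).mono (Set.subset_insert z R)
      · have hci : (insert z R)ᶜ = Rᶜ \ {z} := by
          ext x
          simp only [Set.mem_compl_iff, Set.mem_insert_iff, Set.mem_diff,
            Set.mem_singleton_iff, not_or]
          tauto
        rw [hci]
        exact hWz

/-- If `G` is a 2-connected graph of order `n` with girth `g`, then
`F_c(G) ≤ n - g + 2`. -/
theorem connForcingNumber_le_of_twoConnected {V : Type*} [Fintype V]
    (G : SimpleGraph V) (h2c : TwoConnected G) (g : ℕ) (hg : G.girth = g) :
    connForcingNumber G ≤ Fintype.card V - g + 2 := by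
  classical
  obtain ⟨h3, hconn, hv2⟩ := h2c
  by_cases hgle : g ≤ 2
  · -- trivial case: the bound is at least `n`
    have huniv : IsConnForcingSet G Set.univ := by
      constructor
      · exact ⟨0, rfl⟩
      · refine wconn_iff_induce_connected.mp ?_
        obtain ⟨v⟩ := hconn.nonempty
        refine wconn_of_pivot (v := v) trivial ?_
        intro a _
        obtain ⟨w⟩ := hconn.preconnected a v
        exact ⟨w, fun x _ => trivial⟩
    have hle : connForcingNumber G ≤ Fintype.card V := by
      refine Nat.sInf_le ⟨Set.univ, huniv, ?_⟩
      rw [Set.ncard_univ, Nat.card_eq_fintype_card]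
    omega
  · push_neg at hgle
    have hg3 : 3 ≤ g := hgle
    have hnotacyclic : ¬ G.IsAcyclic := by
      intro hac
      have := hac.girth_eq_zero (G := G)
      omega
    have hegirth_ne : G.egirth ≠ ⊤ := by
      rwa [Ne, egirth_eq_top]
    have hegirth : G.egirth = (g : ℕ∞) := by
      have h1 : ((G.egirth.toNat : ℕ) : ℕ∞) = G.egirth := ENat.coe_toNat hegirth_ne
      have h2 : G.girth = G.egirth.toNat := rfl
      rw [← h1]
      exact_mod_cast h2.symm.trans hg
    have hgirth : ∀ (c : V) (w : G.Walk c c), w.IsCycle → g ≤ w.length := by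
      intro c w hcyc
      have h1 : (g : ℕ∞) ≤ (w.length : ℕ∞) := by
        rw [← hegirth]
        exact le_egirth.mp le_rfl c w hcyc
      exact_mod_cast h1
    have hgn : g ≤ Fintype.card V := by
      obtain ⟨a, w, hcyc, hlen⟩ := exists_girth_eq_length.mpr hnotacyclic
      have h1 : w.support.tail.Nodup := hcyc.support_nodup
      have h2 : w.support.tail.length ≤ Fintype.card V := h1.length_le_card
      have h3' : w.support.length = w.length + 1 := Walk.length_support w
      have h4 : w.support.tail.length = w.support.length - 1 := List.length_tail
      omega
    obtain ⟨R, hRc, hRW, hHW⟩ := grow_full hconn hv2 (g - 2) (by omega) (by omega)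
    have hforce : IsForcingSet G (Rᶜ : Set V) := by
      obtain ⟨m, hm⟩ := force_clear hgirth h3 hconn hv2 (g - 2) R hRc (by omega) (Or.inr hRW)
      exact ⟨m, hm⟩
    have hcfs : IsConnForcingSet G (Rᶜ : Set V) :=
      ⟨hforce, wconn_iff_induce_connected.mp hHW⟩
    have hcompl := Set.ncard_add_ncard_compl R
    rw [Nat.card_eq_fintype_card] at hcompl
    refine Nat.sInf_le ⟨Rᶜ, hcfs, ?_⟩
    omega
end
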